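/- Under Conditions 1 and 2, the rescaled variance of the energy increment converges: lim_{h → 0} σ²(h)/h⁴ = Σ, where Σ = ∫ α(x)² e^{−H(x)} dx (and likewise lim_{h → 0} s²(h)/h⁴ = Σ). -/

import Mathlib

/-!
Write `Δ = H ∘ ψ_h - H` and `T = S ∘ ψ_h`. Reversibility gives `Δ ∘ T = -Δ` and
`H ∘ T = H + Δ`, and `T` preserves volume, so `E[g(Δ)] = E[g(-Δ) e^{-Δ}]`, where
`E[f] = ∫ f e^{-H}`. With `g = id` this yields `2 μ(h) = E[Δ (1 - e^{-Δ})]`, and since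
`|1 - e^{-t}| ≤ |t| (1 + e^{-t})`, `|μ(h)| ≤ s²(h)`; so `μ(h)² / h⁴ ≤ (s²(h)/h⁴)² h⁴ → 0`.
The limit of `s²(h)/h⁴` itself is dominated convergence with dominating function `D e^{-H}`.
-/

open MeasureTheory Filter Topology Set Real

lemma abs_one_sub_exp_neg_le (t : ℝ) : |1 - exp (-t)| ≤ |t| * (1 + exp (-t)) := by
  rcases le_total 0 t with ht | ht
  · have : exp (-t) ≤ 1 := exp_le_one_iff.mpr (by linarith)
    rw [abs_of_nonneg (by linarith), abs_of_nonneg ht]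
    nlinarith [add_one_le_exp (-t), exp_pos (-t)]
  · have : 1 ≤ exp (-t) := one_le_exp_iff.mpr (by linarith)
    have hexp : exp t * exp (-t) = 1 := by rw [← exp_add]; simp
    rw [abs_of_nonpos (by linarith), abs_of_nonpos ht]
    nlinarith [add_one_le_exp t, exp_pos (-t)]

section Reversal

variable {X : Type*} [MeasurableSpace X] {μ : Measure X} {T : X → X} {H Δ : X → ℝ}

lemma integral_comp_reversal (hT : MeasurePreserving T μ μ) (hH : Measurable H)
    (hΔ : Measurable Δ) (hΔT : ∀ x, Δ (T x) = -Δ x) (hHT : ∀ x, H (T x) = H x + Δ x)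
    {g : ℝ → ℝ} (hg : Measurable g) :
    ∫ x, g (-Δ x) * exp (-(H x + Δ x)) ∂μ = ∫ x, g (Δ x) * exp (-H x) ∂μ := by
  have hF : AEStronglyMeasurable (fun y => g (Δ y) * exp (-H y)) (μ.map T) := by
    rw [hT.map_eq]
    exact ((hg.comp hΔ).mul (measurable_exp.comp hH.neg)).aestronglyMeasurable
  have := integral_map hT.measurable.aemeasurable hF
  rw [hT.map_eq] at this
  simp only [this, hΔT, hHT]

lemma integrable_comp_reversal (hT : MeasurePreserving T μ μ) (hH : Measurable H)
    (hΔ : Measurable Δ) (hΔT : ∀ x, Δ (T x) = -Δ x) (hHT : ∀ x, H (T x) = H x + Δ x)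
    {g : ℝ → ℝ} (hg : Measurable g) :
    Integrable (fun x => g (-Δ x) * exp (-(H x + Δ x))) μ ↔
      Integrable (fun x => g (Δ x) * exp (-H x)) μ := by
  have hF : AEStronglyMeasurable (fun y => g (Δ y) * exp (-H y)) μ :=
    ((hg.comp hΔ).mul (measurable_exp.comp hH.neg)).aestronglyMeasurable
  rw [← hT.integrable_comp hF]
  simp only [Function.comp_def, hΔT, hHT]

lemma abs_integral_mul_exp_neg_le_integral_sq (hT : MeasurePreserving T μ μ)
    (hH : Measurable H) (hΔ : Measurable Δ) (hΔT : ∀ x, Δ (T x) = -Δ x)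
    (hHT : ∀ x, H (T x) = H x + Δ x) (hint : Integrable (fun x => Δ x ^ 2 * exp (-H x)) μ) :
    |∫ x, Δ x * exp (-H x) ∂μ| ≤ ∫ x, Δ x ^ 2 * exp (-H x) ∂μ := by
  have hsq_nonneg : 0 ≤ ∫ x, Δ x ^ 2 * exp (-H x) ∂μ :=
    integral_nonneg fun x => by positivity
  by_cases hint₁ : Integrable (fun x => Δ x * exp (-H x)) μ
  case neg => simpa [integral_undef hint₁] using hsq_nonneg
  have hid := integral_comp_reversal hT hH hΔ hΔT hHT measurable_id
  have hsq := integral_comp_reversal hT hH hΔ hΔT hHT (measurable_id.pow_const 2)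
  have hint₁' : Integrable (fun x => Δ x * exp (-(H x + Δ x))) μ := by
    simpa using ((integrable_comp_reversal hT hH hΔ hΔT hHT measurable_id).mpr hint₁).neg
  have hint' := (integrable_comp_reversal hT hH hΔ hΔT hHT (measurable_id.pow_const 2)).mpr hint
  simp only [id, neg_sq, neg_mul, integral_neg] at hid hsq hint'
  have hpt : ∀ x, |Δ x * exp (-H x) - Δ x * exp (-(H x + Δ x))|
      ≤ Δ x ^ 2 * exp (-H x) + Δ x ^ 2 * exp (-(H x + Δ x)) := fun x => by
    have hsplit : exp (-(H x + Δ x)) = exp (-H x) * exp (-Δ x) := by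
      rw [← exp_add, neg_add]
    rw [hsplit, ← sq_abs (Δ x)]
    calc |Δ x * exp (-H x) - Δ x * (exp (-H x) * exp (-Δ x))|
        = |Δ x| * exp (-H x) * |1 - exp (-Δ x)| := by
          rw [← mul_assoc, ← mul_one_sub, abs_mul, abs_mul, abs_of_pos (exp_pos (-H x))]
      _ ≤ |Δ x| * exp (-H x) * (|Δ x| * (1 + exp (-Δ x))) := by
          gcongr; exact abs_one_sub_exp_neg_le _
      _ = _ := by ring
  have h2 : |2 * ∫ x, Δ x * exp (-H x) ∂μ| ≤ 2 * ∫ x, Δ x ^ 2 * exp (-H x) ∂μ :=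
    calc |2 * ∫ x, Δ x * exp (-H x) ∂μ|
        = |∫ x, (Δ x * exp (-H x) - Δ x * exp (-(H x + Δ x))) ∂μ| := by
          rw [integral_sub hint₁ hint₁', ← hid]; ring_nf
      _ ≤ ∫ x, (Δ x ^ 2 * exp (-H x) + Δ x ^ 2 * exp (-(H x + Δ x))) ∂μ :=
          abs_integral_le_integral_abs.trans
            (integral_mono (hint₁.sub hint₁').abs (hint.add hint') hpt)
      _ = 2 * ∫ x, Δ x ^ 2 * exp (-H x) ∂μ := by rw [integral_add hint hint', hsq]; ring
  rw [abs_mul, abs_two] at h2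
  linarith

end Reversal

def IsReversible {Y : Type*} (S : Y → Y) (ψ : Y ≃ Y) : Prop :=
  ∀ x, S (ψ.symm (S x)) = ψ x

lemma IsReversible.apply_apply {Y : Type*} {S : Y → Y} {ψ : Y ≃ Y} (hψ : IsReversible S ψ)
    (hS : Function.Involutive S) (x : Y) : ψ (S (ψ x)) = S x := by
  rw [← hψ (S (ψ x)), hS, Equiv.symm_apply_apply]

lemma IsReversible.abs_integral_energy_increment_le {Y : Type*} [MeasurableSpace Y]
    {μ : Measure Y} {S : Y → Y} {ψ : Y ≃ Y} {H : Y → ℝ} (hψ : IsReversible S ψ) (hS : Function.Involutive S)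
    (hSμ : MeasurePreserving S μ μ) (hψμ : MeasurePreserving ψ μ μ) (hH : Measurable H)
    (hHS : ∀ x, H (S x) = H x)
    (hint : Integrable (fun x => (H (ψ x) - H x) ^ 2 * exp (-H x)) μ) :
    |∫ x, (H (ψ x) - H x) * exp (-H x) ∂μ| ≤ ∫ x, (H (ψ x) - H x) ^ 2 * exp (-H x) ∂μ := by
  refine abs_integral_mul_exp_neg_le_integral_sq (T := S ∘ ψ) (hSμ.comp hψμ) hH
    ((hH.comp hψμ.measurable).sub hH) (fun x => ?_) (fun x => ?_) hint
  · simp only [Function.comp_apply, hψ.apply_apply hS, hHS]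
    ring
  · simp only [Function.comp_apply, hHS]
    ring

lemma measurePreserving_prodMap_id_neg {E F : Type*} [MeasureSpace E] [MeasureSpace F]
    [SigmaFinite (volume : Measure E)] [SigmaFinite (volume : Measure F)] [InvolutiveNeg F]
    [MeasurableNeg F] [(volume : Measure F).IsNegInvariant] :
    MeasurePreserving (Prod.map id Neg.neg : E × F → E × F) volume volume :=
  (MeasurePreserving.id volume).prod (Measure.measurePreserving_neg volume)

lemma tendsto_div_sq_of_eq_sq_mul_add {l : Filter ℝ} {f ρ : ℝ → ℝ} {a : ℝ}
    (hl : l ≤ 𝓝[≠] 0) (hf : ∀ᶠ h in l, f h = h ^ 2 * a + h ^ 2 * ρ h)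
    (hρ : Tendsto ρ l (𝓝 0)) : Tendsto (fun h => f h / h ^ 2) l (𝓝 a) := by
  refine ((tendsto_const_nhds.add hρ).congr' ?_).trans (by rw [add_zero])
  filter_upwards [hf, hl self_mem_nhdsWithin] with h hfh (hh : h ≠ 0)
  rw [hfh]
  field_simp

lemma tendsto_integral_sq_mul_div_pow_four {X : Type*} [MeasurableSpace X] {μ : Measure X}
    {l : Filter ℝ} [l.IsCountablyGenerated] {w α D : X → ℝ} {Δ : ℝ → X → ℝ}
    (hw : ∀ x, 0 ≤ w x) (hwm : AEStronglyMeasurable w μ)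
    (hΔm : ∀ᶠ h in l, AEStronglyMeasurable (Δ h) μ)
    (hlim : ∀ x, Tendsto (fun h => Δ h x / h ^ 2) l (𝓝 (α x)))
    (hbound : ∀ᶠ h in l, ∀ x, Δ h x ^ 2 / h ^ 4 ≤ D x) (hD : Integrable (fun x => D x * w x) μ) :
    Tendsto (fun h => (∫ x, Δ h x ^ 2 * w x ∂μ) / h ^ 4) l (𝓝 (∫ x, α x ^ 2 * w x ∂μ)) := by
  simp only [← integral_div, mul_div_right_comm _ (w _)]
  have hsq : ∀ h x, (Δ h x / h ^ 2) ^ 2 = Δ h x ^ 2 / h ^ 4 := fun _ _ => by ring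
  refine tendsto_integral_filter_of_dominated_convergence _ ?_ ?_ hD
    (ae_of_all _ fun x => by simpa only [hsq] using ((hlim x).pow 2).mul_const (w x))
  · filter_upwards [hΔm] with h (hΔh : AEStronglyMeasurable (Δ h) μ)
    fun_prop
  · filter_upwards [hbound] with h hh
    refine ae_of_all _ fun x => ?_
    rw [Real.norm_of_nonneg (by have := hw x; positivity)]
    exact mul_le_mul_of_nonneg_right (hh x) (hw x)

lemma tendsto_sub_sq_div_pow_four {l : Filter ℝ} (hl : l ≤ 𝓝[≠] 0) {s m : ℝ → ℝ} {L : ℝ}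
    (hs : Tendsto (fun h => s h / h ^ 4) l (𝓝 L)) (hms : ∀ᶠ h in l, |m h| ≤ s h) :
    Tendsto (fun h => (s h - m h ^ 2) / h ^ 4) l (𝓝 L) := by
  have hm : Tendsto (fun h => m h ^ 2 / h ^ 4) l (𝓝 0) := by
    have hpow : Tendsto (fun h : ℝ => h ^ 4) l (𝓝 0) := by
      simpa using ((continuous_pow 4).tendsto (0 : ℝ)).mono_left (hl.trans nhdsWithin_le_nhds)
    refine squeeze_zero' (Eventually.of_forall fun h => by positivity) ?_
      (by simpa using (hs.pow 2).mul hpow)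
    filter_upwards [hms, hl self_mem_nhdsWithin] with h hmh hh
    have hsq : m h ^ 2 ≤ s h ^ 2 := by
      rw [← sq_abs]; exact pow_le_pow_left₀ (abs_nonneg _) hmh 2
    calc m h ^ 2 / h ^ 4 ≤ s h ^ 2 / h ^ 4 := by gcongr
      _ = (s h / h ^ 4) ^ 2 * h ^ 4 := by field_simp
  simpa [sub_div] using hs.sub hm

theorem stmt_4 (m : ℕ)
    (H : ((Fin m → ℝ) × (Fin m → ℝ)) → ℝ) (hHmeas : Measurable H)
    (hHS : ∀ x : (Fin m → ℝ) × (Fin m → ℝ), H (x.1, -x.2) = H x)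
    (ψ : ℝ → ((Fin m → ℝ) × (Fin m → ℝ)) ≃ ((Fin m → ℝ) × (Fin m → ℝ)))
    (hψvol : ∀ h ∈ Set.Ioc (0:ℝ) 1, MeasurePreserving (ψ h) volume volume)
    (hψrev : ∀ h ∈ Set.Ioc (0:ℝ) 1, ∀ x : (Fin m → ℝ) × (Fin m → ℝ),
      (((ψ h).symm (x.1, -x.2)).1, -((ψ h).symm (x.1, -x.2)).2) = ψ h x)
    -- Condition 1
    (α : ((Fin m → ℝ) × (Fin m → ℝ)) → ℝ) (ρ : ((Fin m → ℝ) × (Fin m → ℝ)) → ℝ → ℝ)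
    (hcond1 : ∀ x, ∀ h ∈ Set.Ioc (0:ℝ) 1,
      H (ψ h x) - H x = h ^ 2 * α x + h ^ 2 * ρ x h)
    (hρ : ∀ x, Tendsto (ρ x) (nhdsWithin 0 (Set.Ioi 0)) (nhds 0))
    -- Condition 2
    (D : ((Fin m → ℝ) × (Fin m → ℝ)) → ℝ)
    (hcond2 : ∀ x, ∀ h ∈ Set.Ioc (0:ℝ) 1, (H (ψ h x) - H x) ^ 2 / h ^ 4 ≤ D x)
    (hD : Integrable (fun x => D x * Real.exp (-H x))) :
    -- `lim s²(h)/h⁴ = Σ`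
    Tendsto (fun h : ℝ => (∫ x, (H (ψ h x) - H x) ^ 2 * Real.exp (-H x)) / h ^ 4)
      (nhdsWithin 0 (Set.Ioi 0)) (nhds (∫ x, (α x) ^ 2 * Real.exp (-H x))) ∧
    -- `lim σ²(h)/h⁴ = Σ`
    Tendsto (fun h : ℝ =>
        ((∫ x, (H (ψ h x) - H x) ^ 2 * Real.exp (-H x)) -
          (∫ x, (H (ψ h x) - H x) * Real.exp (-H x)) ^ 2) / h ^ 4)
      (nhdsWithin 0 (Set.Ioi 0)) (nhds (∫ x, (α x) ^ 2 * Real.exp (-H x))) := by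
  have hIoc : ∀ᶠ h in 𝓝[>] (0 : ℝ), h ∈ Ioc 0 1 := Ioc_mem_nhdsGT one_pos
  have hΔmeas : ∀ h ∈ Ioc (0 : ℝ) 1, Measurable fun x => H (ψ h x) - H x :=
    fun h hh => (hHmeas.comp (hψvol h hh).measurable).sub hHmeas
  have hsecond := tendsto_integral_sq_mul_div_pow_four (fun x => (exp_pos (-H x)).le)
    (measurable_exp.comp hHmeas.neg).aestronglyMeasurable
    (hIoc.mono fun h hh => (hΔmeas h hh).aestronglyMeasurable)
    (fun x => tendsto_div_sq_of_eq_sq_mul_add (nhdsGT_le_nhdsNE 0)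
      (hIoc.mono fun h hh => hcond1 x h hh) (hρ x))
    (hIoc.mono fun h hh x => hcond2 x h hh) hD
  refine ⟨hsecond, tendsto_sub_sq_div_pow_four (nhdsGT_le_nhdsNE 0) hsecond ?_⟩
  filter_upwards [hIoc] with h hh
  refine IsReversible.abs_integral_energy_increment_le (S := Prod.map id Neg.neg) (hψrev h hh)
    (Function.Involutive.prodMap (fun _ => rfl) neg_involutive) measurePreserving_prodMap_id_neg
    (hψvol h hh) hHmeas hHS ?_
  refine (hD.const_mul (h ^ 4)).mono' ((hΔmeas h hh).pow_const 2 |>.mul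
    (measurable_exp.comp hHmeas.neg)).aestronglyMeasurable (ae_of_all _ fun x => ?_)
  rw [Real.norm_of_nonneg (by positivity), ← mul_assoc]
  gcongr
  exact (div_le_iff₀' (by have := hh.1; positivity)).mp (hcond2 x h hh)
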